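/- Let T be an unambiguous, clean and trim 1-nT computing a continuous partial function f : A^ω ⇀ B^ω. Then for every compatible set C there exists a function end_C : C → B^ω such that for every initial step (J,u,C) and all p,q ∈ C, val(p)·end_C(p) = val(q)·end_C(q) (as infinite words). -/

import Mathlib

/-- `u` is a prefix of the infinite word `y`. -/
def PrefixOf {B : Type} (u : List B) (y : ℕ → B) : Prop :=
  ∀ (i : ℕ) (h : i < u.length), u.get ⟨i, h⟩ = y i

/-- Concatenation of a finite word and an infinite word. -/
def listPrepend {B : Type} (u : List B) (y : ℕ → B) : ℕ → B :=
  fun i => if h : i < u.length then u.get ⟨i, h⟩ else y (i - u.length)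

/-- The finite word `v` repeated `n` times. -/
def powList {B : Type} (v : List B) (n : ℕ) : List B :=
  (List.replicate n v).flatten

/-- The infinite word `y` equals `u · v^ω` (meaningful when `v ≠ []`). -/
def EqUVomega {B : Type} (u v : List B) (y : ℕ → B) : Prop :=
  ∀ n : ℕ, PrefixOf (u ++ powList v n) y

/-- A one-way nondeterministic transducer (1-nT). The output function is given on
all triples; it is only relevant on the transition relation. -/
structure NT (A B : Type) where
  Q : Type
  fin : Fintype Q
  I : Set Q
  F : Set Q
  trans : Q → A → Q → Prop
  out : Q → A → Q → List B

attribute [instance] NT.fin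

namespace NT

variable {A B : Type}

/-- `FinRun T q u α q'` means `q →^{u|α} q'`. -/
inductive FinRun (T : NT A B) : T.Q → List A → List B → T.Q → Prop
  | nil (q : T.Q) : FinRun T q [] [] q
  | cons {q q' q'' : T.Q} {a : A} {u : List A} {α : List B} :
      T.trans q a q' → FinRun T q' u α q'' →
      FinRun T q (a :: u) (T.out q a q' ++ α) q''

/-- Infinite run on `x` (the `i`-th transition reads `x i`). -/
def IsRun (T : NT A B) (x : ℕ → A) (ρ : ℕ → T.Q) : Prop :=
  ∀ i : ℕ, T.trans (ρ i) (x i) (ρ (i + 1))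

/-- Büchi condition: final states are visited infinitely often. -/
def Final (T : NT A B) (ρ : ℕ → T.Q) : Prop :=
  ∀ i : ℕ, ∃ j : ℕ, i ≤ j ∧ ρ j ∈ T.F

/-- Accepting run: an initial and final run. -/
def Accepting (T : NT A B) (x : ℕ → A) (ρ : ℕ → T.Q) : Prop :=
  T.IsRun x ρ ∧ ρ 0 ∈ T.I ∧ T.Final ρ

/-- Output along the first `n` transitions of a run. -/
def outPrefix (T : NT A B) (x : ℕ → A) (ρ : ℕ → T.Q) (n : ℕ) : List B :=
  ((List.range n).map (fun i => T.out (ρ i) (x i) (ρ (i + 1)))).flatten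

/-- The output along the run is infinite. -/
def InfiniteOutput (T : NT A B) (x : ℕ → A) (ρ : ℕ → T.Q) : Prop :=
  ∀ m : ℕ, ∃ n : ℕ, m ≤ (T.outPrefix x ρ n).length

/-- The (infinite) output along the run equals `y`. -/
def OutEq (T : NT A B) (x : ℕ → A) (ρ : ℕ → T.Q) (y : ℕ → B) : Prop :=
  ∀ n : ℕ, PrefixOf (T.outPrefix x ρ n) y

/-- Every input labels at most one accepting run. -/
def Unambiguous (T : NT A B) : Prop :=
  ∀ x ρ₁ ρ₂, T.Accepting x ρ₁ → T.Accepting x ρ₂ → ρ₁ = ρ₂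

/-- The partial function computed by an unambiguous 1-nT. -/
def Computes (T : NT A B) (f : (ℕ → A) → Option (ℕ → B)) : Prop :=
  ∀ x y, f x = some y ↔
    ∃ ρ, T.Accepting x ρ ∧ T.InfiniteOutput x ρ ∧ T.OutEq x ρ y

/-- Every state occurs in some accepting run. -/
def Trim (T : NT A B) : Prop :=
  ∀ q : T.Q, ∃ x ρ, T.Accepting x ρ ∧ ∃ i, ρ i = q

/-- The output along every accepting run is infinite. -/
def Clean (T : NT A B) : Prop :=
  ∀ x ρ, T.Accepting x ρ → T.InfiniteOutput x ρ

end NT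

/-- Continuity (for the Cantor topology) of a partial function on infinite words. -/
def ContinuousPartial {A B : Type} (f : (ℕ → A) → Option (ℕ → B)) : Prop :=
  ∀ x fx, f x = some fx → ∀ n : ℕ, ∃ p : ℕ, ∀ y fy, f y = some fy →
    (∀ i < p, x i = y i) → ∀ i < n, fx i = fy i

namespace NT

variable {A B : Type}

/-- A compatible set of states: a common infinite future, one branch of which is final. -/
def Compatible (T : NT A B) (C : Set T.Q) : Prop :=
  ∃ (x : ℕ → A) (ρ : T.Q → ℕ → T.Q),
    (∀ q ∈ C, ρ q 0 = q ∧ T.IsRun x (ρ q)) ∧ ∃ q ∈ C, T.Final (ρ q)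

/-- `(C,u,D)` is a pre-step, with predecessor map `pre` and outputs `val`. -/
def PreStepOn (T : NT A B) (C : Set T.Q) (u : List A) (D : Set T.Q)
    (pre : T.Q → T.Q) (val : T.Q → List B) : Prop :=
  T.Compatible C ∧ T.Compatible D ∧
  (∀ q ∈ D, pre q ∈ C ∧ T.FinRun (pre q) u (val q) q) ∧
  (∀ q ∈ D, ∀ p ∈ C, (∃ α, T.FinRun p u α q) → p = pre q)

/-- `(C,u,D)` is a step: a pre-step with surjective predecessor map. -/
def StepOn (T : NT A B) (C : Set T.Q) (u : List A) (D : Set T.Q)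
    (pre : T.Q → T.Q) (val : T.Q → List B) : Prop :=
  T.PreStepOn C u D pre val ∧ ∀ p ∈ C, ∃ q ∈ D, pre q = p

/-- `(J,u,C)` is an initial step. -/
def InitStepOn (T : NT A B) (J : Set T.Q) (u : List A) (C : Set T.Q)
    (pre : T.Q → T.Q) (val : T.Q → List B) : Prop :=
  J ⊆ T.I ∧ T.StepOn J u C pre val

/-- `com` is the longest common prefix of the `val q` (`q ∈ C`) and
`adv q` is the advance of `q`, i.e. `val q = com ++ adv q`. -/
def AdvData (T : NT A B) (C : Set T.Q) (val : T.Q → List B)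
    (com : List B) (adv : T.Q → List B) : Prop :=
  (∀ q ∈ C, val q = com ++ adv q) ∧
  (∀ c : List B, (∀ q ∈ C, c <+: val q) → c <+: com)

end NT


/-! The output of `u · x` on an initial step into `C` is approximated, by continuity, by the
outputs of the inputs `u · x[0,m) · w`, where `m` runs through the visits of the branch from
`p ∈ C` to a recurrent state `s` and `w` is an accepting future of `s` (trimness). These outputs
all have the form `val p · z_m`, with `z_m` independent of the step, so `val p` followed by the
pointwise limit of the `z_m` is the output of `u · x` for every `p ∈ C`. -/

open Filter

section listPrepend

variable {B : Type}

theorem listPrepend_of_lt (l : List B) (y : ℕ → B) {i : ℕ} (h : i < l.length) :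
    listPrepend l y i = l[i] := dif_pos h

@[simp]
theorem listPrepend_length_add (l : List B) (y : ℕ → B) (j : ℕ) :
    listPrepend l y (l.length + j) = y j := by
  simp [listPrepend]

@[simp]
theorem listPrepend_nil (y : ℕ → B) : listPrepend [] y = y := by
  funext i
  simp [listPrepend]

theorem listPrepend_cons (a : B) (l : List B) (y : ℕ → B) :
    listPrepend (a :: l) y = fun i => Nat.casesOn i a (listPrepend l y) := by
  funext i
  cases i <;> simp [listPrepend]

theorem listPrepend_append (u v : List B) (y : ℕ → B) :
    listPrepend (u ++ v) y = listPrepend u (listPrepend v y) := by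
  funext i
  simp only [listPrepend, List.length_append, List.get_eq_getElem]
  split_ifs with huv hu hv hv <;> try omega
  · exact List.getElem_append_left hu
  · rw [List.getElem_append_right (by omega)]
  · congr 1
    omega

theorem listPrepend_congr {l : List B} {y y' : ℕ → B} {n : ℕ} (h : ∀ i < n, y i = y' i) :
    ∀ i < l.length + n, listPrepend l y i = listPrepend l y' i := by
  intro i hi
  simp only [listPrepend]
  split_ifs with hl
  · rfl
  · exact h _ (by omega)

theorem listPrepend_map_range_of_lt (x w : ℕ → B) {m i : ℕ} (hi : i < m) :
    listPrepend ((List.range m).map x) w i = x i := by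
  simp [listPrepend_of_lt _ _ (show i < ((List.range m).map x).length by simpa)]

end listPrepend

section PrefixOf

variable {B : Type}

theorem PrefixOf.of_isPrefix {l l' : List B} {y : ℕ → B} (h : l <+: l') (h' : PrefixOf l' y) :
    PrefixOf l y := by
  intro i hi
  simpa [h.getElem hi] using h' i (hi.trans_le h.length_le)

theorem PrefixOf.listPrepend {l : List B} {y : ℕ → B} (v : List B) (h : PrefixOf l y) :
    PrefixOf (v ++ l) (listPrepend v y) := by
  intro i hi
  simp only [List.get_eq_getElem, _root_.listPrepend]
  split_ifs with hv
  · exact List.getElem_append_left hv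
  · rw [List.getElem_append_right (by omega)]
    simpa using h (i - v.length) (by simp at hi; omega)

theorem PrefixOf.drop_append {l v : List B} {y : ℕ → B} (h : PrefixOf (v ++ l) y) :
    PrefixOf l (fun j => y (v.length + j)) := by
  intro i hi
  simpa using h (v.length + i) (by simp; omega)

end PrefixOf

namespace NT

variable {A B : Type} {T : NT A B}

theorem FinRun.append {q q' q'' : T.Q} {u v : List A} {α β : List B}
    (h : T.FinRun q u α q') (h' : T.FinRun q' v β q'') :
    T.FinRun q (u ++ v) (α ++ β) q'' := by
  induction h with
  | nil => simpa using h'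
  | cons htr _ ih => simpa using FinRun.cons htr (ih h')

theorem outPrefix_add (x : ℕ → A) (ρ : ℕ → T.Q) (m n : ℕ) :
    T.outPrefix x ρ (m + n) =
      T.outPrefix x ρ m ++ T.outPrefix (fun i => x (m + i)) (fun i => ρ (m + i)) n := by
  simp only [outPrefix, List.range_add, List.map_append, List.map_map, List.flatten_append,
    Function.comp_def, Nat.add_assoc]

theorem outPrefix_succ (x : ℕ → A) (ρ : ℕ → T.Q) (n : ℕ) :
    T.outPrefix x ρ (n + 1) =
      T.out (ρ 0) (x 0) (ρ 1) ++ T.outPrefix (fun i => x (i + 1)) (fun i => ρ (i + 1)) n := by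
  simp [outPrefix, List.range_succ_eq_map, Function.comp_def]

theorem outPrefix_isPrefix (x : ℕ → A) (ρ : ℕ → T.Q) {m n : ℕ} (h : m ≤ n) :
    T.outPrefix x ρ m <+: T.outPrefix x ρ n := by
  obtain ⟨k, rfl⟩ := Nat.exists_eq_add_of_le h
  exact ⟨_, (outPrefix_add x ρ m k).symm⟩

theorem IsRun.finRun {x : ℕ → A} {ρ : ℕ → T.Q} (h : T.IsRun x ρ) (m : ℕ) :
    T.FinRun (ρ 0) ((List.range m).map x) (T.outPrefix x ρ m) (ρ m) := by
  induction m with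
  | zero => exact FinRun.nil _
  | succ m ih =>
    have hstep := FinRun.cons (h m) (FinRun.nil (T := T) (ρ (m + 1)))
    simpa [outPrefix, List.range_succ] using ih.append hstep

theorem final_shift_iff {ρ : ℕ → T.Q} (k : ℕ) : T.Final (fun i => ρ (k + i)) ↔ T.Final ρ := by
  constructor
  · intro h i
    obtain ⟨j, hj, hF⟩ := h i
    exact ⟨k + j, by omega, hF⟩
  · intro h i
    obtain ⟨j, hj, hF⟩ := h (k + i)
    exact ⟨j - k, by omega, by simpa [Nat.add_sub_cancel' (show k ≤ j by omega)]⟩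

theorem FinRun.prepend {q₀ q : T.Q} {u : List A} {α : List B} (h : T.FinRun q₀ u α q)
    {w : ℕ → A} {σ : ℕ → T.Q} (hσ : T.IsRun w σ) (hσ0 : σ 0 = q) :
    ∃ ρ, T.IsRun (listPrepend u w) ρ ∧ ρ 0 = q₀ ∧ (fun i => ρ (u.length + i)) = σ ∧
      T.outPrefix (listPrepend u w) ρ u.length = α := by
  induction h with
  | nil q => exact ⟨σ, by simpa using hσ, hσ0, by simp, by simp [outPrefix]⟩
  | @cons q q' q'' a u α htr _ ih =>
    obtain ⟨ρ, hρ, hρ0, hρσ, hρα⟩ := ih hσ0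
    refine ⟨fun i => Nat.casesOn i q ρ, ?_, rfl, ?_, ?_⟩
    · rintro (_ | i)
      · simpa [listPrepend_cons, hρ0] using htr
      · simpa [listPrepend_cons] using hρ i
    · simpa [Nat.add_right_comm] using hρσ
    · simp [outPrefix_succ, listPrepend_cons, hρ0, hρα]

theorem FinRun.exists_accepting_listPrepend {q₀ q : T.Q} {u : List A} {α : List B}
    (h : T.FinRun q₀ u α q) (hq₀ : q₀ ∈ T.I) {w : ℕ → A} {σ : ℕ → T.Q} (hσ : T.IsRun w σ)
    (hσ0 : σ 0 = q) (hσF : T.Final σ) :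
    ∃ ρ, T.Accepting (listPrepend u w) ρ ∧
      ∀ n, T.outPrefix (listPrepend u w) ρ (u.length + n) = α ++ T.outPrefix w σ n := by
  obtain ⟨ρ, hρ, hρ0, hρσ, hρα⟩ := h.prepend hσ hσ0
  refine ⟨ρ, ⟨hρ, hρ0 ▸ hq₀, (final_shift_iff u.length).1 (hρσ ▸ hσF)⟩, fun n => ?_⟩
  simp [outPrefix_add, hρσ, hρα]

theorem OutEq.listPrepend {x w : ℕ → A} {ρ σ : ℕ → T.Q} {k : ℕ} {α : List B} {W : ℕ → B}
    (h : ∀ n, T.outPrefix x ρ (k + n) = α ++ T.outPrefix w σ n) (hW : T.OutEq w σ W) :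
    T.OutEq x ρ (listPrepend α W) := fun n =>
  PrefixOf.of_isPrefix (outPrefix_isPrefix x ρ (Nat.le_add_left n k))
    (by rw [h n]; exact (hW n).listPrepend α)

theorem InfiniteOutput.exists_outEq {x : ℕ → A} {ρ : ℕ → T.Q} (h : T.InfiniteOutput x ρ) :
    ∃ y, T.OutEq x ρ y := by
  choose N hN using h
  refine ⟨fun j => (T.outPrefix x ρ (N (j + 1)))[j]'(by have := hN (j + 1); omega),
    fun n i hi => ?_⟩
  simp only [List.get_eq_getElem]
  rcases le_total n (N (i + 1)) with hle | hle
  · exact (outPrefix_isPrefix x ρ hle).getElem hi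
  · exact ((outPrefix_isPrefix x ρ hle).getElem _).symm

theorem Computes.apply_eq_some {f : (ℕ → A) → Option (ℕ → B)} (hT : T.Computes f)
    (hCl : T.Clean) {x : ℕ → A} {ρ : ℕ → T.Q} {y : ℕ → B} (hρ : T.Accepting x ρ)
    (hy : T.OutEq x ρ y) : f x = some y :=
  (hT x y).2 ⟨ρ, hρ, hCl x ρ hρ, hy⟩

theorem Computes.exists_apply_eq_some {f : (ℕ → A) → Option (ℕ → B)} (hT : T.Computes f)
    (hCl : T.Clean) {x : ℕ → A} {ρ : ℕ → T.Q} (hρ : T.Accepting x ρ) : ∃ y, f x = some y :=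
  let ⟨y, hy⟩ := (hCl x ρ hρ).exists_outEq
  ⟨y, hT.apply_eq_some hCl hρ hy⟩

theorem Computes.apply_listPrepend_eq {f : (ℕ → A) → Option (ℕ → B)} (hT : T.Computes f)
    (hCl : T.Clean) {q₀ q : T.Q} {u : List A} {α : List B} (h : T.FinRun q₀ u α q)
    (hq₀ : q₀ ∈ T.I) {w : ℕ → A} {σ : ℕ → T.Q} {W : ℕ → B} (hσ : T.IsRun w σ)
    (hσ0 : σ 0 = q) (hσF : T.Final σ) (hW : T.OutEq w σ W) :
    f (listPrepend u w) = some (listPrepend α W) :=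
  let ⟨_, hρ, hout⟩ := h.exists_accepting_listPrepend hq₀ hσ hσ0 hσF
  hT.apply_eq_some hCl hρ (OutEq.listPrepend hout hW)

theorem Trim.exists_final_run (hTr : T.Trim) (hCl : T.Clean) (q : T.Q) :
    ∃ (w : ℕ → A) (σ : ℕ → T.Q) (W : ℕ → B),
      T.IsRun w σ ∧ σ 0 = q ∧ T.Final σ ∧ T.OutEq w σ W := by
  obtain ⟨z, ρ, hρ, k, rfl⟩ := hTr q
  obtain ⟨y, hy⟩ := (hCl z ρ hρ).exists_outEq
  refine ⟨fun i => z (k + i), fun i => ρ (k + i), fun j => y ((T.outPrefix z ρ k).length + j),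
    fun i => hρ.1 (k + i), rfl, (final_shift_iff k).2 hρ.2.2, fun n => ?_⟩
  exact PrefixOf.drop_append (outPrefix_add z ρ k n ▸ hy (k + n))

theorem Computes.eventually_listPrepend_eq {f : (ℕ → A) → Option (ℕ → B)}
    (hT : T.Computes f) (hCl : T.Clean) (hcont : ContinuousPartial f) {q₀ : T.Q} {u : List A}
    {α : List B} {x w : ℕ → A} {ρ σ : ℕ → T.Q} {W Y : ℕ → B} (hq₀ : q₀ ∈ T.I)
    (hu : T.FinRun q₀ u α (ρ 0)) (hρ : T.IsRun x ρ) (hσ : T.IsRun w σ) (hσF : T.Final σ)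
    (hW : T.OutEq w σ W) (hY : f (listPrepend u x) = some Y) (i : ℕ) :
    ∀ᶠ m in atTop ⊓ 𝓟 {m | ρ m = σ 0},
      listPrepend α (listPrepend (T.outPrefix x ρ m) W) i = Y i := by
  obtain ⟨P, hP⟩ := hcont _ _ hY (i + 1)
  rw [eventually_inf_principal, eventually_atTop]
  refine ⟨P, fun m hm hρm => ?_⟩
  have hsplice := hT.apply_listPrepend_eq hCl (hu.append (hρ.finRun m)) hq₀ hσ hρm.symm hσF hW
  rw [listPrepend_append, listPrepend_append] at hsplice
  refine (hP _ _ hsplice (fun j hj => ?_) i i.lt_succ_self).symm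
  exact listPrepend_congr (fun k hk => (listPrepend_map_range_of_lt x w hk).symm) j (by omega)

theorem InitStepOn.exists_eventually_listPrepend_eq {f : (ℕ → A) → Option (ℕ → B)}
    (hT : T.Computes f) (hCl : T.Clean) (hcont : ContinuousPartial f) {J C : Set T.Q}
    {u : List A} {pre : T.Q → T.Q} {val : T.Q → List B} (hS : T.InitStepOn J u C pre val)
    {x : ℕ → A} {ρ : T.Q → ℕ → T.Q} (hρ : ∀ q ∈ C, ρ q 0 = q ∧ T.IsRun x (ρ q)) {q₁ : T.Q}
    (hq₁ : q₁ ∈ C) (hq₁F : T.Final (ρ q₁)) {w : T.Q → ℕ → A} {σ : T.Q → ℕ → T.Q}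
    {W : T.Q → ℕ → B} (hσ : ∀ p, T.IsRun (w p) (σ p)) (hσF : ∀ p, T.Final (σ p))
    (hW : ∀ p, T.OutEq (w p) (σ p) (W p)) :
    ∃ Y : ℕ → B, ∀ p ∈ C, ∀ i, ∀ᶠ m in atTop ⊓ 𝓟 {m | ρ p m = σ p 0},
      listPrepend (val p) (listPrepend (T.outPrefix x (ρ p) m) (W p)) i = Y i := by
  obtain ⟨hJ, ⟨-, -, hpre, -⟩, -⟩ := hS
  have hrun : ∀ p ∈ C, T.FinRun (pre p) u (val p) (ρ p 0) := fun p hp => by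
    rw [(hρ p hp).1]
    exact (hpre p hp).2
  obtain ⟨ψ, hψ, -⟩ := (hrun q₁ hq₁).exists_accepting_listPrepend (hJ (hpre q₁ hq₁).1)
    (hρ q₁ hq₁).2 rfl hq₁F
  obtain ⟨Y, hY⟩ := hT.exists_apply_eq_some hCl hψ
  exact ⟨Y, fun p hp => hT.eventually_listPrepend_eq hCl hcont (hJ (hpre p hp).1) (hrun p hp)
    (hρ p hp).2 (hσ p) (hσF p) (hW p) hY⟩

end NT

theorem exists_frequently_atTop_eq {α : Type*} [Finite α] (g : ℕ → α) :
    ∃ a, ∃ᶠ m in atTop, g m = a :=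
  frequently_exists.1 (Frequently.of_forall fun m => ⟨g m, rfl⟩)

theorem listPrepend_eq_of_eventually {B ι : Type} {l : Filter ι} [l.NeBot] {Z : ι → ℕ → B}
    {v v' : List B} {Y Y' : ℕ → B} (h : ∀ i, ∀ᶠ m in l, listPrepend v (Z m) i = Y i)
    (h' : ∀ i, ∀ᶠ m in l, listPrepend v' (Z m) i = Y' i) :
    listPrepend v (fun j => Y' (v'.length + j)) = Y := by
  funext i
  by_cases hi : i < v.length
  · obtain ⟨m, hm⟩ := (h i).exists
    rw [← hm, listPrepend_of_lt _ _ hi, listPrepend_of_lt _ _ hi]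
  · obtain ⟨j, rfl⟩ := Nat.exists_eq_add_of_le (not_lt.1 hi)
    obtain ⟨m, hm, hm'⟩ := ((h (v.length + j)).and (h' (v'.length + j))).exists
    simp only [listPrepend_length_add] at hm hm' ⊢
    rw [← hm, hm']

theorem exists_end_function_general
    {A B : Type}
    (T : NT A B) (f : (ℕ → A) → Option (ℕ → B))
    (hCl : T.Clean) (hTr : T.Trim)
    (hT : T.Computes f) (hcont : ContinuousPartial f)
    (C : Set T.Q) (hC : T.Compatible C) :
    ∃ endC : T.Q → ℕ → B,
      ∀ (J : Set T.Q) (u : List A) (pre : T.Q → T.Q) (val : T.Q → List B),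
        T.InitStepOn J u C pre val →
        ∀ p ∈ C, ∀ q ∈ C,
          listPrepend (val p) (endC p) = listPrepend (val q) (endC q) := by
  obtain ⟨x, ρ, hρ, q₁, hq₁, hq₁F⟩ := hC
  have hfuture : ∀ p, ∃ (w : ℕ → A) (σ : ℕ → T.Q) (W : ℕ → B), T.IsRun w σ ∧ T.Final σ ∧
      T.OutEq w σ W ∧ ∃ᶠ m in atTop, ρ p m = σ 0 := fun p => by
    obtain ⟨s, hs⟩ := exists_frequently_atTop_eq (ρ p)
    obtain ⟨w, σ, W, hσ, rfl, hσF, hW⟩ := hTr.exists_final_run hCl s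
    exact ⟨w, σ, W, hσ, hσF, hW, hs⟩
  choose w σ W hσ hσF hW hrec using hfuture
  have key {J u pre val} (hS : T.InitStepOn J u C pre val) :=
    hS.exists_eventually_listPrepend_eq hT hCl hcont hρ hq₁ hq₁F hσ hσF hW
  by_cases hstep : ∃ J u pre val, T.InitStepOn J u C pre val
  · obtain ⟨J₀, u₀, pre₀, val₀, hstep₀⟩ := hstep
    obtain ⟨Y₀, hY₀⟩ := key hstep₀
    refine ⟨fun p j => Y₀ ((val₀ p).length + j), fun J u pre val hS p hp q hq => ?_⟩
    obtain ⟨Y, hY⟩ := key hS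
    have := frequently_iff_neBot.1 (hrec p)
    have := frequently_iff_neBot.1 (hrec q)
    rw [listPrepend_eq_of_eventually (hY p hp) (hY₀ p hp),
      listPrepend_eq_of_eventually (hY q hq) (hY₀ q hq)]
  · exact ⟨W, fun J u pre val hS => absurd ⟨J, u, pre, val, hS⟩ hstep⟩

/-- Ends: every compatible set admits a family of infinite futures equalizing the
outputs of all initial steps ending in it. -/
theorem exists_end_function
    {A B : Type} [Fintype A] [Fintype B]
    (T : NT A B) (f : (ℕ → A) → Option (ℕ → B))
    (hU : T.Unambiguous) (hCl : T.Clean) (hTr : T.Trim)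
    (hT : T.Computes f) (hcont : ContinuousPartial f)
    (C : Set T.Q) (hC : T.Compatible C) :
    ∃ endC : T.Q → ℕ → B,
      ∀ (J : Set T.Q) (u : List A) (pre : T.Q → T.Q) (val : T.Q → List B),
        T.InitStepOn J u C pre val →
        ∀ p ∈ C, ∀ q ∈ C,
          listPrepend (val p) (endC p) = listPrepend (val q) (endC q) :=
  exists_end_function_general T f hCl hTr hT hcont C hC
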